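/- Let H be a complex Hilbert space and let A and B be bounded self-adjoint operators on H; for s ∈ ℝ write cos(sA) := (exp(isA) + exp(-isA))/2 and cos(sB) := (exp(isB) + exp(-isB))/2, where exp denotes the exponential in the Banach algebra of bounded operators on H, and S_B(t) := ∫₀ᵗ cos(τB) dτ (Bochner integral). Then for every s ∈ ℝ, cos(sA) − cos(sB) = ∫₀ˢ S_B(s−r) ∘ (B² − A²) ∘ cos(rA) dr, the integral being a Bochner integral in the Banach algebra of bounded operators. -/

import Mathlib

open MeasureTheory Filter Topology intervalIntegral

/-- The operator cosine family `cos (s A) = (exp (i s A) + exp (-i s A)) / 2` of a bounded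
operator `A` on a complex Hilbert space. -/
noncomputable def opCos {H : Type*} [NormedAddCommGroup H] [InnerProductSpace ℂ H]
    [CompleteSpace H] (A : H →L[ℂ] H) (s : ℝ) : H →L[ℂ] H :=
  (2 : ℂ)⁻¹ • (NormedSpace.exp (((s : ℂ) * Complex.I) • A) +
    NormedSpace.exp ((-(s : ℂ) * Complex.I) • A))

/-- The operator sine family `S_B (t) = ∫₀ᵗ cos (τ B) dτ` of a bounded operator `B` on a
complex Hilbert space. -/
noncomputable def opSin {H : Type*} [NormedAddCommGroup H] [InnerProductSpace ℂ H]
    [CompleteSpace H] (B : H →L[ℂ] H) (t : ℝ) : H →L[ℂ] H :=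
  ∫ τ in (0 : ℝ)..t, opCos B τ

/-!
Put `F r = S_B(s - r) C_A'(r) + C_B(s - r) C_A(r)`. Then `F s = cos(sA)` and `F 0 = cos(sB)`,
and differentiating, using `C_a'' = -C_a a²`, `S_a a² = -C_a'` (both sides vanish at `0` and have
the same derivative) and the commutation of `a²` with `C_a`, gives
`F'(r) = S_B(s - r) (B² - A²) C_A(r)`; the identity is the fundamental theorem of calculus for `F`.
-/

open NormedSpace (exp)
open Complex (I)

section CosineFamily

variable {𝔸 : Type*} [NormedRing 𝔸] [NormedAlgebra ℂ 𝔸]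

-- The formula of `opCos` in any complex normed algebra; `opCos A = cosFamily A` definitionally.
noncomputable def cosFamily (a : 𝔸) (s : ℝ) : 𝔸 :=
  (2 : ℂ)⁻¹ • (exp (((s : ℂ) * I) • a) + exp ((-(s : ℂ) * I) • a))

noncomputable def cosFamilyDeriv (a : 𝔸) (s : ℝ) : 𝔸 :=
  (2 : ℂ)⁻¹ • (exp (((s : ℂ) * I) • a) * (I • a) + exp (((s : ℂ) * -I) • a) * (-I • a))

noncomputable def sinFamily (a : 𝔸) (t : ℝ) : 𝔸 := ∫ τ in (0 : ℝ)..t, cosFamily a τ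

theorem cosFamily_zero (a : 𝔸) : cosFamily a 0 = 1 := by
  simp only [cosFamily, Complex.ofReal_zero, neg_zero, zero_mul, zero_smul, NormedSpace.exp_zero,
    ← two_smul ℂ (1 : 𝔸), smul_smul]
  norm_num

theorem cosFamilyDeriv_zero (a : 𝔸) : cosFamilyDeriv a 0 = 0 := by
  simp [cosFamilyDeriv]

theorem sinFamily_zero (a : 𝔸) : sinFamily a 0 = 0 := by
  simp [sinFamily]

theorem commute_sq_cosFamily (a : 𝔸) (s : ℝ) : Commute (a ^ 2) (cosFamily a s) :=
  (((Commute.self_pow a 2).symm.smul_right _).exp_right.add_right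
    ((Commute.self_pow a 2).symm.smul_right _).exp_right).smul_right _

variable [CompleteSpace 𝔸]

theorem hasDerivAt_exp_ofReal_mul_smul (z : ℂ) (a : 𝔸) (s : ℝ) :
    HasDerivAt (fun t : ℝ => exp (((t : ℂ) * z) • a)) (exp (((s : ℂ) * z) • a) * (z • a)) s := by
  simpa [Function.comp_def, mul_smul] using
    (hasDerivAt_exp_smul_const (z • a) (s : ℂ)).scomp s Complex.ofRealCLM.hasDerivAt

theorem hasDerivAt_cosFamily (a : 𝔸) (s : ℝ) :
    HasDerivAt (cosFamily a) (cosFamilyDeriv a s) s := by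
  have h := ((hasDerivAt_exp_ofReal_mul_smul I a s).add
    (hasDerivAt_exp_ofReal_mul_smul (-I) a s)).const_smul (2 : ℂ)⁻¹
  have hcos : cosFamily a =
      fun t : ℝ => (2 : ℂ)⁻¹ • (exp (((t : ℂ) * I) • a) + exp (((t : ℂ) * -I) • a)) := by
    funext t
    rw [cosFamily, neg_mul_comm]
  rw [hcos]
  exact h

theorem hasDerivAt_cosFamilyDeriv (a : 𝔸) (s : ℝ) :
    HasDerivAt (cosFamilyDeriv a) (-(cosFamily a s * a ^ 2)) s := by
  have h := (((hasDerivAt_exp_ofReal_mul_smul I a s).mul_const (I • a)).add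
    ((hasDerivAt_exp_ofReal_mul_smul (-I) a s).mul_const (-I • a))).const_smul (2 : ℂ)⁻¹
  refine h.congr_deriv ?_
  have hsq : ∀ (z : ℂ) (e : 𝔸), z * z = -1 → e * (z • a) * (z • a) = -(e * a ^ 2) :=
    fun z e hz => by rw [mul_assoc, smul_mul_smul_comm, hz, neg_one_smul, mul_neg, sq]
  rw [hsq _ _ Complex.I_mul_I, hsq _ _ (by rw [neg_mul_neg, Complex.I_mul_I]), ← neg_add,
    ← add_mul, smul_neg, ← smul_mul_assoc, cosFamily, neg_mul_comm]

theorem continuous_cosFamily (a : 𝔸) : Continuous (cosFamily a) :=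
  continuous_iff_continuousAt.2 fun s => (hasDerivAt_cosFamily a s).continuousAt

theorem hasDerivAt_sinFamily (a : 𝔸) (t : ℝ) : HasDerivAt (sinFamily a) (cosFamily a t) t :=
  ((continuous_cosFamily a).integral_hasStrictDerivAt 0 t).hasDerivAt

theorem continuous_sinFamily (a : 𝔸) : Continuous (sinFamily a) :=
  continuous_iff_continuousAt.2 fun t => (hasDerivAt_sinFamily a t).continuousAt

theorem sinFamily_mul_sq (a : 𝔸) (t : ℝ) : sinFamily a t * a ^ 2 = -cosFamilyDeriv a t := by
  have h : ∀ τ, HasDerivAt (fun τ => sinFamily a τ * a ^ 2 + cosFamilyDeriv a τ) 0 τ := fun τ =>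
    (((hasDerivAt_sinFamily a τ).mul_const (a ^ 2)).add
      (hasDerivAt_cosFamilyDeriv a τ)).congr_deriv (add_neg_cancel _)
  have hconst := is_const_of_deriv_eq_zero (fun τ => (h τ).differentiableAt)
    (fun τ => (h τ).deriv) t 0
  simpa [sinFamily_zero, cosFamilyDeriv_zero, eq_neg_iff_add_eq_zero] using hconst

theorem cosFamily_sub_cosFamily (a b : 𝔸) (s : ℝ) :
    cosFamily a s - cosFamily b s =
      ∫ r in (0 : ℝ)..s, sinFamily b (s - r) * (b ^ 2 - a ^ 2) * cosFamily a r := by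
  have hF : ∀ r, HasDerivAt
      (fun r => sinFamily b (s - r) * cosFamilyDeriv a r + cosFamily b (s - r) * cosFamily a r)
      (sinFamily b (s - r) * (b ^ 2 - a ^ 2) * cosFamily a r) r := fun r => by
    have h := (((hasDerivAt_sinFamily b (s - r)).comp_const_sub s r).mul
      (hasDerivAt_cosFamilyDeriv a r)).add
      (((hasDerivAt_cosFamily b (s - r)).comp_const_sub s r).mul (hasDerivAt_cosFamily a r))
    refine h.congr_deriv ?_
    rw [← sinFamily_mul_sq, ← (commute_sq_cosFamily a r).eq]
    noncomm_ring
  have hcont : Continuous fun r => sinFamily b (s - r) * (b ^ 2 - a ^ 2) * cosFamily a r :=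
    (((continuous_sinFamily b).comp (continuous_sub_left s)).mul continuous_const).mul
      (continuous_cosFamily a)
  rw [integral_eq_sub_of_hasDerivAt (fun r _ => hF r) (hcont.intervalIntegrable 0 s)]
  simp [sinFamily_zero, cosFamily_zero, cosFamilyDeriv_zero]

end CosineFamily

theorem stmt8_general {H : Type*} [NormedAddCommGroup H] [InnerProductSpace ℂ H] [CompleteSpace H]
    (A B : H →L[ℂ] H) :
    ∀ s : ℝ, opCos A s - opCos B s =
      ∫ r in (0 : ℝ)..s, opSin B (s - r) * (B ^ 2 - A ^ 2) * opCos A r :=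
  cosFamily_sub_cosFamily A B

/-- **Duhamel identity for the difference of two cosine families.** For bounded
self-adjoint operators `A`, `B` on a complex Hilbert space,
`cos (s A) - cos (s B) = ∫₀ˢ S_B (s - r) ∘ (B² - A²) ∘ cos (r A) dr`. -/
theorem stmt8 {H : Type*} [NormedAddCommGroup H] [InnerProductSpace ℂ H] [CompleteSpace H]
    (A B : H →L[ℂ] H) (hA : IsSelfAdjoint A) (hB : IsSelfAdjoint B) :
    ∀ s : ℝ, opCos A s - opCos B s =
      ∫ r in (0 : ℝ)..s, opSin B (s - r) * (B ^ 2 - A ^ 2) * opCos A r :=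
  stmt8_general A B
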